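/- Let L, T, υ, φ, λ > 0 be reals and N a positive natural number. Let e : ℝ → ℝ^n be continuous on [0,T] and satisfy, for all t ∈ [0,T], ‖e(t)‖₂ ≤ ∫₀^t ( υL + (4φλ/(Nυ²))·τ·e^{2Lτ} + L‖e(τ)‖₂ ) dτ. Then sup_{t∈[0,T]} ‖e(t)‖₂ ≤ ( υL + (2φλ/(Nυ²L))·(e^{2LT} − 1) ) · T · e^{LT}. -/

import Mathlib

/-!
Splitting the integrand, the forcing term `υL + Cτe^{2Lτ}` (with `C = 4φλ/(Nυ²)`) integrates over `[0, t] ⊆ [0, T]` to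
at most `A T`, where `A` is the bracket in the bound (bound `τ` by `T` and integrate
`e^{2Lτ}` exactly). So `u = ‖e‖` satisfies `u t ≤ A T + L ∫₀^t u`, and Grönwall's inequality
in integral form gives `u t ≤ A T e^{Lt} ≤ A T e^{LT}`. The integral form reduces to Mathlib's
differential Grönwall inequality applied to the right-hand side `K + L ∫ₐ^t u`, whose right
derivative `L u t` is at most `L` times itself.
-/

open Set Real intervalIntegral

theorem le_mul_exp_of_le_add_mul_integral {u : ℝ → ℝ} {a b K L : ℝ} (hL : 0 ≤ L)
    (hu : ContinuousOn u (Icc a b)) (h : ∀ t ∈ Icc a b, u t ≤ K + L * ∫ τ in a..t, u τ) :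
    ∀ t ∈ Icc a b, u t ≤ K * exp (L * (t - a)) := by
  intro t ht
  have hab : a ≤ b := ht.1.trans ht.2
  set g : ℝ → ℝ := fun t => K + L * ∫ τ in a..t, u τ
  have hg_cont : ContinuousOn g (Icc a b) := by
    simpa [uIcc_of_le hab] using ((continuousOn_primitive_interval'
      (hu.intervalIntegrable_of_Icc hab) left_mem_uIcc).const_smul L).const_add K
  have hg_deriv : ∀ x ∈ Ico a b, HasDerivWithinAt g (L * u x) (Ici x) x := by
    intro x hx
    have hux : ContinuousWithinAt u (Ioi x) x :=
      (hu x (Ico_subset_Icc_self hx)).mono_of_mem_nhdsWithin (Icc_mem_nhdsGT_of_mem hx)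
    refine ((integral_hasDerivWithinAt_right (t := Ioi x) ?_ ?_ hux).const_mul L).const_add K
    · exact (hu.mono (Icc_subset_Icc le_rfl hx.2.le)).intervalIntegrable_of_Icc hx.1
    · exact (hu.stronglyMeasurableAtFilter_nhdsWithin measurableSet_Icc x).filter_mono
        (nhdsWithin_le_of_mem (Icc_mem_nhdsGT_of_mem hx))
  have hg_le := le_gronwallBound_of_liminf_deriv_right_le (δ := K) (K := L) (ε := 0) hg_cont
    (fun x hx r hr => (hg_deriv x hx).liminf_right_slope_le hr) (by simp [g])
    (fun x hx => by simpa using mul_le_mul_of_nonneg_left (h x (Ico_subset_Icc_self hx)) hL)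
  calc u t ≤ g t := h t ht
    _ ≤ K * exp (L * (t - a)) := by simpa [gronwallBound_ε0] using hg_le t ht

theorem integral_exp_mul {a b c : ℝ} (hc : c ≠ 0) :
    ∫ τ in a..b, exp (c * τ) = (exp (c * b) - exp (c * a)) / c := by
  rw [integral_comp_mul_left (fun x => exp x) hc, integral_exp, smul_eq_mul, inv_mul_eq_div]

theorem integral_add_mul_self_mul_exp_le {a C c t T : ℝ} (ha : 0 ≤ a) (hC : 0 ≤ C) (hc : c ≠ 0)
    (ht : 0 ≤ t) (htT : t ≤ T) :
    ∫ τ in (0 : ℝ)..t, (a + C * τ * exp (c * τ)) ≤ (a + C * ((exp (c * T) - 1) / c)) * T := by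
  have hT : 0 ≤ T := ht.trans htT
  have hcont : Continuous fun τ : ℝ => a + C * T * exp (c * τ) := by fun_prop
  calc ∫ τ in (0 : ℝ)..t, (a + C * τ * exp (c * τ))
      ≤ ∫ τ in (0 : ℝ)..t, (a + C * T * exp (c * τ)) :=
        integral_mono_on ht ((by fun_prop : Continuous _).intervalIntegrable _ _)
          (hcont.intervalIntegrable _ _) fun τ hτ => by gcongr; exact hτ.2.trans htT
    _ ≤ ∫ τ in (0 : ℝ)..T, (a + C * T * exp (c * τ)) :=
        integral_mono_interval le_rfl ht htT
          (MeasureTheory.ae_of_all _ fun τ =>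
            add_nonneg ha (mul_nonneg (mul_nonneg hC hT) (exp_pos _).le))
          (hcont.intervalIntegrable _ _)
    _ = (a + C * ((exp (c * T) - 1) / c)) * T := by
        rw [integral_add intervalIntegrable_const
            ((by fun_prop : Continuous _).intervalIntegrable _ _),
          integral_const, integral_const_mul, integral_exp_mul hc, mul_zero, exp_zero, smul_eq_mul]
        ring

theorem deviation_bound_general {n : ℕ} (L T υ φ lam : ℝ)
    (hL : 0 < L) (hυ : 0 < υ) (hφ : 0 < φ) (hlam : 0 < lam)
    (N : ℕ)
    (e : ℝ → EuclideanSpace ℝ (Fin n))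
    (he : ContinuousOn e (Set.Icc 0 T))
    (hineq : ∀ t ∈ Set.Icc (0 : ℝ) T,
      ‖e t‖ ≤ ∫ τ in (0 : ℝ)..t,
        (υ * L + (4 * φ * lam / ((N : ℝ) * υ ^ 2)) * τ * Real.exp (2 * L * τ) +
          L * ‖e τ‖)) :
    ∀ t ∈ Set.Icc (0 : ℝ) T,
      ‖e t‖ ≤ (υ * L + (2 * φ * lam / ((N : ℝ) * υ ^ 2 * L)) *
        (Real.exp (2 * L * T) - 1)) * T * Real.exp (L * T) := by
  intro t ht
  set C : ℝ := 4 * φ * lam / ((N : ℝ) * υ ^ 2)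
  set A : ℝ := υ * L + (2 * φ * lam / ((N : ℝ) * υ ^ 2 * L)) * (Real.exp (2 * L * T) - 1)
  have hA : A = υ * L + C * ((exp (2 * L * T) - 1) / (2 * L)) := by ring
  have hnorm : ContinuousOn (fun τ => ‖e τ‖) (Icc 0 T) := he.norm
  have hle : ∀ s ∈ Icc 0 T, ‖e s‖ ≤ A * T + L * ∫ τ in (0 : ℝ)..s, ‖e τ‖ := by
    intro s hs
    calc ‖e s‖ ≤ _ := hineq s hs
      _ = (∫ τ in (0 : ℝ)..s, (υ * L + C * τ * exp (2 * L * τ))) +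
            L * ∫ τ in (0 : ℝ)..s, ‖e τ‖ := by
        rw [integral_add ((by fun_prop : Continuous _).intervalIntegrable _ _)
          (((hnorm.mono (Icc_subset_Icc le_rfl hs.2)).intervalIntegrable_of_Icc hs.1).const_mul L),
          integral_const_mul]
      _ ≤ A * T + L * ∫ τ in (0 : ℝ)..s, ‖e τ‖ := by
        rw [hA]
        gcongr
        exact integral_add_mul_self_mul_exp_le (by positivity) (by positivity) (by positivity)
          hs.1 hs.2
  have hAT : 0 ≤ A * T := by
    have : 0 ≤ exp (2 * L * T) - 1 := sub_nonneg.2 (one_le_exp (by nlinarith [ht.1, ht.2]))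
    exact mul_nonneg (by positivity) (ht.1.trans ht.2)
  calc ‖e t‖ ≤ A * T * exp (L * (t - 0)) :=
        le_mul_exp_of_le_add_mul_integral hL.le hnorm hle t ht
    _ ≤ A * T * exp (L * T) := by gcongr; linarith [ht.2]

/-- Deviation bound (abstract form of Lemma 3): if `e : ℝ → ℝ^n` is continuous
on `[0,T]` and satisfies
`‖e(t)‖ ≤ ∫₀^t (υL + (4φλ/(Nυ²)) τ e^{2Lτ} + L‖e(τ)‖) dτ` on `[0,T]`, then
`sup_{t∈[0,T]} ‖e(t)‖ ≤ (υL + (2φλ/(Nυ²L))(e^{2LT} − 1)) T e^{LT}`. -/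
theorem deviation_bound {n : ℕ} (L T υ φ lam : ℝ)
    (hL : 0 < L) (hT : 0 < T) (hυ : 0 < υ) (hφ : 0 < φ) (hlam : 0 < lam)
    (N : ℕ) (hN : 0 < N)
    (e : ℝ → EuclideanSpace ℝ (Fin n))
    (he : ContinuousOn e (Set.Icc 0 T))
    (hineq : ∀ t ∈ Set.Icc (0 : ℝ) T,
      ‖e t‖ ≤ ∫ τ in (0 : ℝ)..t,
        (υ * L + (4 * φ * lam / ((N : ℝ) * υ ^ 2)) * τ * Real.exp (2 * L * τ) +
          L * ‖e τ‖)) :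
    ∀ t ∈ Set.Icc (0 : ℝ) T,
      ‖e t‖ ≤ (υ * L + (2 * φ * lam / ((N : ℝ) * υ ^ 2 * L)) *
        (Real.exp (2 * L * T) - 1)) * T * Real.exp (L * T) :=
  deviation_bound_general L T υ φ lam hL hυ hφ hlam N e he hineq
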